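/- Let q, u, v, ũ, ṽ be as in the basic dilation construction, and define ũũ = ũ ⊗ S and ṽṽ = ∑_m q^{-m} (u ⊗ id)^{-m} ṽ (u ⊗ id)^m ⊗ p_m on H ⊗ ℓ²(ℤ) ⊗ ℓ²(ℤ). If ‖vu - q·uv‖ ≤ δ with δ ∈ (0,1), then there is an isometry ι : H ⊗ ℓ²(ℤ) → H ⊗ ℓ²(ℤ) ⊗ ℓ²(ℤ) such that ‖ũ - ι*ũũι‖ < √δ and ‖ṽ - ι*ṽṽι‖ < √δ. -/

import Mathlib

/-- Integer powers of an operator `u`, where for `k < 0` we use `(u*)^(-k)`. -/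
noncomputable def opZpow {H : Type*} [NormedAddCommGroup H] [InnerProductSpace ℂ H]
    [CompleteSpace H] (u : H →L[ℂ] H) : ℤ → (H →L[ℂ] H)
  | Int.ofNat n => u ^ n
  | Int.negSucc n => (star u) ^ (n + 1)

/-!
Take `ι = id ⊗ ξ_N` with `ξ_N` the normalised indicator of `[-N, N]`. The compression
`ι* ũũ ι` is `⟪ξ_N, S ξ_N⟫ • ũ = (1 - 1/(2N+1)) • ũ`, and `ι* ṽṽ ι` is diagonal with entries
`∑ₘ |ξ_N m|² w_{k-m}`, where `w_k = q^k u^k v u^{-k}` are the diagonal entries of `ṽ`.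
Consecutive `w_k` differ by a unitary conjugate of `q uv - vu`, so `‖w_k - w_{k-m}‖ ≤ |m| δ` and
the second defect is at most `N(N+1)δ/(2N+1)`. For `N = ⌊1/√δ⌋` both defects are below `√δ`.
-/

open scoped lp ComplexConjugate InnerProductSpace
open Finset

theorem snd_ne_of_notMem_range_prodMk {α κ : Type*} {m : κ} {x : α × κ}
    (hx : x ∉ Set.range fun a : α => (a, m)) : x.2 ≠ m :=
  fun h => hx ⟨x.1, by rw [← h]⟩

theorem RCLike.sum_conj_mul_self_of_sum_norm_sq {𝕜 κ : Type*} [RCLike 𝕜] (s : Finset κ)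
    (ξ : κ → 𝕜) (hξ : ∑ m ∈ s, ‖ξ m‖ ^ 2 = 1) : ∑ m ∈ s, conj (ξ m) * ξ m = 1 := by
  simp_rw [RCLike.conj_mul]
  exact_mod_cast congrArg ((↑) : ℝ → 𝕜) hξ

namespace lp

section Norm

variable {α β E F : Type*} [NormedAddCommGroup E] [NormedAddCommGroup F] {p : ENNReal}

theorem norm_eq_of_injective (hp : 0 < p.toReal) {j : α → β} (hj : Function.Injective j)
    {f : ℓ^p(α, E)} {g : ℓ^p(β, F)}
    (hgf : ∀ a, ‖g (j a)‖ = ‖f a‖) (hg : ∀ b ∉ Set.range j, g b = 0) : ‖g‖ = ‖f‖ := by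
  have hsupp : Function.support (fun b => ‖g b‖ ^ p.toReal) ⊆ Set.range j := fun b hb => by
    by_contra hb'
    simp [hg b hb', Real.zero_rpow hp.ne'] at hb
  rw [norm_eq_tsum_rpow hp, norm_eq_tsum_rpow hp, ← hj.tsum_eq hsupp]
  simp only [hgf]

theorem opNorm_le_of_norm_apply_le {𝕜 : Type*} [NontriviallyNormedField 𝕜] [NormedSpace 𝕜 E]
    [NormedSpace 𝕜 F] [Fact (1 ≤ p)] {T : ℓ^p(α, E) →L[𝕜] ℓ^p(α, F)} {C : ℝ} (hC : 0 ≤ C)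
    (hT : ∀ f a, ‖T f a‖ ≤ C * ‖f a‖) : ‖T‖ ≤ C := by
  have hp : p ≠ 0 := (zero_lt_one.trans_le (Fact.out : 1 ≤ p)).ne'
  refine T.opNorm_le_bound hC fun f => ?_
  calc ‖T f‖ ≤ ‖C • toNorm f‖ :=
        norm_mono hp fun a => by simpa [abs_of_nonneg hC] using hT f a
    _ = C * ‖f‖ := by rw [norm_const_smul hp, norm_toNorm, Real.norm_of_nonneg hC]

theorem opNorm_le_one_of_apply_eq_comp_equiv {𝕜 : Type*} [NontriviallyNormedField 𝕜]
    [NormedSpace 𝕜 E] [NormedSpace 𝕜 F] [Fact (1 ≤ p)] (hp : p ≠ ⊤)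
    {S : ℓ^p(α, E) →L[𝕜] ℓ^p(α, F)} (e : α ≃ α) {u : E → F} (hu : ∀ x, ‖u x‖ = ‖x‖)
    (hS : ∀ f a, S f a = u (f (e a))) : ‖S‖ ≤ 1 := by
  have hp0 : 0 < p.toReal :=
    ENNReal.toReal_pos (zero_lt_one.trans_le (Fact.out : 1 ≤ p)).ne' hp
  refine S.opNorm_le_bound zero_le_one fun f => ?_
  rw [one_mul]
  refine (norm_eq_of_injective hp0 e.symm.injective (fun a => by simp [hS, hu]) fun b hb => ?_).le
  exact absurd (e.symm.surjective b) hb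

end Norm

section Slice

variable {𝕜 α κ E : Type*} [RCLike 𝕜] [NormedAddCommGroup E] [InnerProductSpace 𝕜 E]

variable [DecidableEq κ]

theorem memℓp_slice (m : κ) (f : ℓ²(α, E)) :
    Memℓp (fun x : α × κ => if x.2 = m then f x.1 else 0) 2 := by
  refine memℓp_gen (((Prod.mk_left_injective m).summable_iff fun x hx => ?_).mp ?_)
  · simp [snd_ne_of_notMem_range_prodMk hx]
  · simpa [Function.comp_def] using (lp.memℓp f).summable (by norm_num)

variable (𝕜) in
/-- The embedding `f ↦ f ⊗ e_m` of `ℓ²(α, E)` onto the slice `α × {m}` of `ℓ²(α × κ, E)`. -/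
noncomputable def sliceIncl (m : κ) : ℓ²(α, E) →L[𝕜] ℓ²(α × κ, E) :=
  LinearMap.mkContinuous
    { toFun f := ⟨_, memℓp_slice m f⟩
      map_add' f g := by ext x; simp only [lp.coeFn_add, Pi.add_apply]; split_ifs <;> simp
      map_smul' c f := by ext x; by_cases h : x.2 = m <;> simp [h] }
    1 fun f => by
      rw [one_mul]
      refine (norm_eq_of_injective (by norm_num) (Prod.mk_left_injective m) (fun a => ?_)
        fun x hx => ?_).le
      · simp
      · simp [snd_ne_of_notMem_range_prodMk hx]

@[simp]
theorem sliceIncl_apply (m : κ) (f : ℓ²(α, E)) (x : α × κ) :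
    sliceIncl 𝕜 m f x = if x.2 = m then f x.1 else 0 := rfl

theorem sliceIncl_single [DecidableEq α] (m : κ) (a : α) (e : E) :
    sliceIncl 𝕜 m (lp.single 2 a e) = lp.single 2 (a, m) e := by
  ext x
  obtain ⟨b, n⟩ := x
  by_cases hn : n = m
  · by_cases ha : b = a <;> simp [hn, ha]
  · simp [hn]

theorem adjoint_sliceIncl_apply [CompleteSpace E] (m : κ) (g : ℓ²(α × κ, E)) (a : α) :
    (sliceIncl 𝕜 m).adjoint g a = g (a, m) := by
  classical
  refine ext_inner_left 𝕜 fun e : E => ?_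
  calc ⟪e, (sliceIncl 𝕜 m).adjoint g a⟫_𝕜 = ⟪lp.single 2 a e, (sliceIncl 𝕜 m).adjoint g⟫_𝕜 :=
        (inner_single_left (G := fun _ : α => E) a e _).symm
    _ = ⟪lp.single 2 (a, m) e, g⟫_𝕜 := by
        rw [ContinuousLinearMap.adjoint_inner_right, sliceIncl_single]
    _ = ⟪e, g (a, m)⟫_𝕜 := inner_single_left (G := fun _ : α × κ => E) _ _ _

end Slice

section TensorRight

variable {𝕜 α κ E : Type*} [RCLike 𝕜] [NormedAddCommGroup E] [InnerProductSpace 𝕜 E]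
  [DecidableEq κ] (s : Finset κ) (ξ : κ → 𝕜)

/-- `id ⊗ 1_s ξ : ℓ²(α, E) → ℓ²(α × κ, E)`, where `1_s ξ ∈ ℓ²(κ, 𝕜)` is `ξ` cut off outside `s`. -/
noncomputable def tensorRight : ℓ²(α, E) →L[𝕜] ℓ²(α × κ, E) :=
  ∑ m ∈ s, ξ m • sliceIncl 𝕜 m

theorem tensorRight_apply (f : ℓ²(α, E)) (x : α × κ) :
    tensorRight s ξ f x = if x.2 ∈ s then ξ x.2 • f x.1 else 0 := by
  rw [tensorRight, _root_.sum_apply, coeFn_sum, Finset.sum_apply]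
  simp [eq_comm (a := x.2)]

variable [CompleteSpace E]

theorem adjoint_tensorRight_apply (g : ℓ²(α × κ, E)) (a : α) :
    (tensorRight s ξ).adjoint g a = ∑ m ∈ s, conj (ξ m) • g (a, m) := by
  rw [tensorRight, map_sum, _root_.sum_apply, coeFn_sum, Finset.sum_apply]
  simp [map_smulₛₗ, adjoint_sliceIncl_apply]

theorem isometry_tensorRight (hξ : ∑ m ∈ s, ‖ξ m‖ ^ 2 = 1) :
    Isometry (tensorRight (α := α) (E := E) s ξ) := by
  rw [ContinuousLinearMap.isometry_iff_adjoint_comp_self]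
  ext f a
  simp [adjoint_tensorRight_apply, tensorRight_apply, smul_smul, ← Finset.sum_smul,
    RCLike.sum_conj_mul_self_of_sum_norm_sq s ξ hξ]

theorem sub_tensorRight_compression_shift {σ : α → α} {τ : κ → κ} {u : E →L[𝕜] E}
    {S : ℓ²(α, E) →L[𝕜] ℓ²(α, E)} {T : ℓ²(α × κ, E) →L[𝕜] ℓ²(α × κ, E)}
    (hS : ∀ f a, S f a = u (f (σ a))) (hT : ∀ g x, T g x = u (g (σ x.1, τ x.2))) :
    S - (tensorRight s ξ).adjoint ∘L T ∘L tensorRight s ξ =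
      (1 - ∑ m ∈ s, conj (ξ m) * if τ m ∈ s then ξ (τ m) else 0) • S := by
  ext f a
  simp only [_root_.sub_apply, ContinuousLinearMap.comp_apply,
    _root_.smul_apply, coeFn_sub, coeFn_smul, Pi.sub_apply, Pi.smul_apply,
    adjoint_tensorRight_apply, hS, hT, tensorRight_apply]
  rw [sub_smul, one_smul, Finset.sum_smul]
  congr 1
  refine Finset.sum_congr rfl fun m _ => ?_
  split_ifs <;> simp [smul_smul]

end TensorRight

theorem norm_sub_tensorRight_compression_diag_le {𝕜 E : Type*} [RCLike 𝕜]
    [NormedAddCommGroup E] [InnerProductSpace 𝕜 E] [CompleteSpace E] (s : Finset ℤ) (ξ : ℤ → 𝕜)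
    (hξ : ∑ m ∈ s, ‖ξ m‖ ^ 2 = 1) {w : ℤ → E →L[𝕜] E} {δ : ℝ}
    (hw : ∀ a b, dist (w a) (w b) ≤ dist a b * δ)
    {S : ℓ²(ℤ, E) →L[𝕜] ℓ²(ℤ, E)} {T : ℓ²(ℤ × ℤ, E) →L[𝕜] ℓ²(ℤ × ℤ, E)}
    (hS : ∀ f k, S f k = w k (f k)) (hT : ∀ g x, T g x = w (x.1 - x.2) (g x)) :
    ‖S - (tensorRight s ξ).adjoint ∘L T ∘L tensorRight s ξ‖ ≤
      (∑ m ∈ s, ‖ξ m‖ ^ 2 * |(m : ℝ)|) * δ := by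
  have hδ : 0 ≤ δ := dist_nonneg.trans (by simpa using hw 0 1)
  refine opNorm_le_of_norm_apply_le (by positivity) fun f k => ?_
  -- since `∑ |ξ m|² = 1`, `S f k` is the `|ξ m|²`-average of the constant family `w k (f k)`
  have hcoord : (S - (tensorRight s ξ).adjoint ∘L T ∘L tensorRight s ξ) f k =
      ∑ m ∈ s, (conj (ξ m) * ξ m) • (w k - w (k - m)) (f k) := by
    simp only [_root_.sub_apply, ContinuousLinearMap.comp_apply, coeFn_sub, Pi.sub_apply,
      adjoint_tensorRight_apply, hS, hT, tensorRight_apply]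
    simp only [smul_sub, Finset.sum_sub_distrib, ← Finset.sum_smul,
      RCLike.sum_conj_mul_self_of_sum_norm_sq s ξ hξ, one_smul]
    congr 1
    refine Finset.sum_congr rfl fun m hm => ?_
    rw [if_pos hm, map_smul, smul_smul]
  calc ‖(S - (tensorRight s ξ).adjoint ∘L T ∘L tensorRight s ξ) f k‖
      ≤ ∑ m ∈ s, ‖ξ m‖ ^ 2 * (|(m : ℝ)| * δ * ‖f k‖) := by
        rw [hcoord]
        refine (norm_sum_le _ _).trans (Finset.sum_le_sum fun m _ => ?_)
        rw [norm_smul, RCLike.conj_mul]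
        have hwm : ‖w k - w (k - m)‖ ≤ |(m : ℝ)| * δ := by
          simpa [dist_eq_norm, Int.dist_eq, Int.norm_eq_abs] using hw k (k - m)
        simp only [norm_pow, RCLike.norm_ofReal, abs_norm]
        gcongr
        exact (ContinuousLinearMap.le_opNorm _ _).trans (by gcongr)
    _ = (∑ m ∈ s, ‖ξ m‖ ^ 2 * |(m : ℝ)|) * δ * ‖f k‖ := by
        rw [Finset.sum_mul, Finset.sum_mul]
        exact Finset.sum_congr rfl fun m _ => by ring

end lp

theorem dist_le_dist_mul_of_dist_add_one_le {X : Type*} [PseudoMetricSpace X] {w : ℤ → X}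
    {C : ℝ} (h : ∀ n, dist (w n) (w (n + 1)) ≤ C) (a b : ℤ) :
    dist (w a) (w b) ≤ dist a b * C := by
  wlog hab : a ≤ b generalizing a b
  · rw [dist_comm, dist_comm a]
    exact this b a (le_of_not_ge hab)
  obtain ⟨n, rfl⟩ := Int.le.dest hab
  have hsteps := dist_le_range_sum_of_dist_le (f := fun i : ℕ => w (a + i)) n
    fun {k} _ => by simpa [add_assoc] using h (a + k)
  simpa [Int.dist_eq, mul_comm] using hsteps

theorem norm_smul_conj_zpow_add_one_sub {A : Type*} [NormedRing A] [StarRing A] [CStarRing A]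
    [NormedAlgebra ℂ A] (U : unitary A) (v : A) {q : ℂ} (hq : ‖q‖ = 1) (n : ℤ) :
    ‖q ^ (n + 1) • (↑(U ^ (n + 1)) * v * ↑(U ^ (-(n + 1)))) -
        q ^ n • (↑(U ^ n) * v * ↑(U ^ (-n)) : A)‖ = ‖v * U - q • (U * v)‖ := by
  have hq0 : q ≠ 0 := norm_ne_zero_iff.mp (by rw [hq]; exact one_ne_zero)
  have hsucc : U ^ (n + 1) = U ^ n * U := zpow_add_one U n
  have hpred : U ^ (-(n + 1)) = star U * U ^ (-n) := by
    rw [neg_add', sub_eq_neg_add, zpow_add, zpow_neg_one, Unitary.star_eq_inv]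
  have key : q ^ (n + 1) • (↑(U ^ (n + 1)) * v * ↑(U ^ (-(n + 1)))) -
      q ^ n • (↑(U ^ n) * v * ↑(U ^ (-n)) : A) =
      q ^ n • (↑(U ^ n) * ((q • (↑U * v) - v * ↑U) * ↑(star U)) * ↑(U ^ (-n))) := by
    rw [hsucc, hpred, zpow_add_one₀ hq0, mul_smul, sub_mul, mul_assoc v,
      Unitary.coe_mul_star_self, mul_one]
    simp only [Submonoid.coe_mul, mul_sub, sub_mul, smul_sub, smul_mul_assoc, mul_smul_comm,
      mul_assoc]
  rw [key, norm_smul, norm_zpow, hq, one_zpow, one_mul, CStarRing.norm_mul_coe_unitary,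
    CStarRing.norm_coe_unitary_mul, CStarRing.norm_mul_coe_unitary, norm_sub_rev]

section Operators

variable {H : Type*} [NormedAddCommGroup H] [InnerProductSpace ℂ H] [CompleteSpace H]

theorem opZpow_eq_coe_zpow {u : H →L[ℂ] H} (hu : u ∈ unitary (H →L[ℂ] H)) (n : ℤ) :
    opZpow u n = ↑((⟨u, hu⟩ : unitary (H →L[ℂ] H)) ^ n) := by
  cases n with
  | ofNat n => simp [opZpow]
  | negSucc n => simp [opZpow, zpow_negSucc, ← Unitary.star_eq_inv, star_pow]

/-- The diagonal entries `q^n u^n v u^{-n}` of `ṽ`. -/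
noncomputable def twistedConj (q : ℂ) (u v : H →L[ℂ] H) (n : ℤ) : H →L[ℂ] H :=
  q ^ n • (opZpow u n * v * opZpow u (-n))

theorem dist_twistedConj_le {q : ℂ} (hq : ‖q‖ = 1) {u v : H →L[ℂ] H}
    (hu : u ∈ unitary (H →L[ℂ] H)) {δ : ℝ} (h : ‖v * u - q • (u * v)‖ ≤ δ) (a b : ℤ) :
    dist (twistedConj q u v a) (twistedConj q u v b) ≤ dist a b * δ := by
  refine dist_le_dist_mul_of_dist_add_one_le (fun n => ?_) a b
  rw [dist_comm, dist_eq_norm, twistedConj, twistedConj]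
  simp only [opZpow_eq_coe_zpow hu]
  exact (norm_smul_conj_zpow_add_one_sub _ v hq n).trans_le h

end Operators

/-- The constant value `(2N+1)^{-1/2}` of `ξ_N` on `[-N, N]`. -/
noncomputable def uniformWeight (N : ℕ) : ℂ := ((√(2 * N + 1 : ℝ))⁻¹ : ℝ)

theorem norm_uniformWeight_sq (N : ℕ) : ‖uniformWeight N‖ ^ 2 = (2 * N + 1 : ℝ)⁻¹ := by
  rw [uniformWeight, Complex.norm_real, Real.norm_eq_abs, sq_abs, inv_pow,
    Real.sq_sqrt (by positivity)]

theorem sum_norm_uniformWeight_sq (N : ℕ) :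
    ∑ _m ∈ Icc (-(N : ℤ)) N, ‖uniformWeight N‖ ^ 2 = 1 := by
  rw [sum_const, Int.card_Icc, norm_uniformWeight_sq, nsmul_eq_mul,
    show (N + 1 - -(N : ℤ)).toNat = 2 * N + 1 by omega]
  push_cast
  field_simp

theorem one_sub_sum_uniformWeight_mul_shift (N : ℕ) :
    1 - ∑ m ∈ Icc (-(N : ℤ)) N,
      conj (uniformWeight N) * (if m - 1 ∈ Icc (-(N : ℤ)) N then uniformWeight N else 0) =
      ((2 * N + 1 : ℝ)⁻¹ : ℝ) := by
  have hfilter : {m ∈ Icc (-(N : ℤ)) N | m - 1 ∈ Icc (-(N : ℤ)) N} = Icc (-(N : ℤ) + 1) N := by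
    ext m
    simp only [mem_filter, mem_Icc]
    omega
  simp only [mul_ite, mul_zero, RCLike.conj_mul]
  rw [sum_ite, sum_const_zero, add_zero, sum_const, hfilter, Int.card_Icc, nsmul_eq_mul,
    show (N + 1 - (-(N : ℤ) + 1)).toNat = 2 * N by omega]
  rw [← RCLike.ofReal_pow, norm_uniformWeight_sq, RCLike.ofReal_eq_complex_ofReal]
  have hN : (2 * N + 1 : ℂ) ≠ 0 := by exact_mod_cast (2 * N).succ_ne_zero
  push_cast
  field_simp
  ring

theorem sum_abs_Icc (N : ℕ) : ∑ m ∈ Icc (-(N : ℤ)) N, |m| = N * (N + 1) := by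
  induction N with
  | zero => simp
  | succ N ih =>
    have hIcc : Icc (-((N + 1 : ℕ) : ℤ)) (N + 1 : ℕ) =
        insert (-(N + 1 : ℤ)) (insert (N + 1 : ℤ) (Icc (-(N : ℤ)) N)) := by
      ext m
      simp only [mem_Icc, mem_insert]
      omega
    rw [hIcc, sum_insert (by simp; omega), sum_insert (by simp), ih]
    rw [abs_neg, abs_of_nonneg (by positivity)]
    push_cast
    ring

theorem sum_norm_uniformWeight_sq_mul_abs (N : ℕ) :
    ∑ m ∈ Icc (-(N : ℤ)) N, ‖uniformWeight N‖ ^ 2 * |(m : ℝ)| = N * (N + 1) / (2 * N + 1) := by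
  rw [← mul_sum, norm_uniformWeight_sq]
  have := congrArg ((↑) : ℤ → ℝ) (sum_abs_Icc N)
  push_cast at this
  rw [this, inv_mul_eq_div]

theorem exists_nat_inv_lt_and_mul_sq_lt {t : ℝ} (ht0 : 0 < t) (ht1 : t < 1) :
    ∃ N : ℕ, (2 * N + 1 : ℝ)⁻¹ < t ∧ N * (N + 1) / (2 * N + 1) * t ^ 2 < t := by
  set N := ⌊t⁻¹⌋₊
  have hlt : 1 < (N + 1) * t := (inv_lt_iff_one_lt_mul₀ ht0).mp (Nat.lt_floor_add_one t⁻¹)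
  have hle : N * t ≤ 1 := by
    simpa [ht0.ne'] using mul_le_mul_of_nonneg_right (Nat.floor_le (inv_nonneg.2 ht0.le)) ht0.le
  have hN1 : (1 : ℝ) ≤ N :=
    Nat.one_le_cast.mpr (Nat.le_floor (by simpa using one_le_inv₀ ht0 |>.mpr ht1.le))
  refine ⟨N, ?_, ?_⟩
  · rw [inv_lt_comm₀ (by positivity) ht0, inv_lt_iff_one_lt_mul₀ ht0]
    nlinarith
  · rw [div_mul_eq_mul_div, div_lt_iff₀ (by positivity)]
    calc N * (N + 1) * t ^ 2 = (N * t) * ((N + 1) * t) := by ring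
      _ ≤ 1 * ((N + 1) * t) := by gcongr
      _ < t * (2 * N + 1) := by nlinarith

/-- `H ⊗ ℓ²(ℤ)` is modelled as `ℓ²(ℤ, H)` and `H ⊗ ℓ²(ℤ) ⊗ ℓ²(ℤ)` as `ℓ²(ℤ × ℤ, H)`. -/
theorem stmt_10_general {H : Type*} [NormedAddCommGroup H] [InnerProductSpace ℂ H] [CompleteSpace H]
    (q : ℂ) (hq : ‖q‖ = 1) (δ : ℝ) (hδ0 : 0 < δ) (hδ1 : δ < 1) (u v : H →L[ℂ] H)
    (hu : u ∈ unitary (H →L[ℂ] H))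
    (h : ‖v * u - q • (u * v)‖ ≤ δ)
    (Ut Vt : lp (fun _ : ℤ => H) 2 →L[ℂ] lp (fun _ : ℤ => H) 2)
    (hUt : ∀ (f : lp (fun _ : ℤ => H) 2) (k : ℤ), (Ut f : ∀ _ : ℤ, H) k = u (f (k - 1)))
    (hVt : ∀ (f : lp (fun _ : ℤ => H) 2) (k : ℤ),
      (Vt f : ∀ _ : ℤ, H) k = q ^ k • (opZpow u k * v * opZpow u (-k)) (f k))
    (Uu Vv : lp (fun _ : ℤ × ℤ => H) 2 →L[ℂ] lp (fun _ : ℤ × ℤ => H) 2)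
    (hUu : ∀ (f : lp (fun _ : ℤ × ℤ => H) 2) (p : ℤ × ℤ),
      (Uu f : ∀ _ : ℤ × ℤ, H) p = u (f (p.1 - 1, p.2 - 1)))
    (hVv : ∀ (f : lp (fun _ : ℤ × ℤ => H) 2) (p : ℤ × ℤ),
      (Vv f : ∀ _ : ℤ × ℤ, H) p =
        q ^ (p.1 - p.2) • (opZpow u (p.1 - p.2) * v * opZpow u (p.2 - p.1)) (f p)) :
    ∃ ι : lp (fun _ : ℤ => H) 2 →L[ℂ] lp (fun _ : ℤ × ℤ => H) 2,
      Isometry ι ∧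
      ‖Ut - ContinuousLinearMap.adjoint ι ∘L Uu ∘L ι‖ < Real.sqrt δ ∧
      ‖Vt - ContinuousLinearMap.adjoint ι ∘L Vv ∘L ι‖ < Real.sqrt δ := by
  obtain ⟨N, hUN, hVN⟩ := exists_nat_inv_lt_and_mul_sq_lt (Real.sqrt_pos.2 hδ0)
    ((Real.sqrt_lt' one_pos).2 (by simpa using hδ1))
  rw [Real.sq_sqrt hδ0.le] at hVN
  set s := Icc (-(N : ℤ)) N
  set ξ : ℤ → ℂ := fun _ => uniformWeight N
  refine ⟨lp.tensorRight s ξ, lp.isometry_tensorRight s ξ (sum_norm_uniformWeight_sq N), ?_, ?_⟩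
  · rw [lp.sub_tensorRight_compression_shift s ξ (σ := fun k => k - 1) (τ := fun m => m - 1)
      hUt hUu, one_sub_sum_uniformWeight_mul_shift]
    calc _ = (2 * N + 1 : ℝ)⁻¹ * ‖Ut‖ := by
          rw [norm_smul, Complex.norm_real, Real.norm_of_nonneg (by positivity)]
      _ ≤ (2 * N + 1 : ℝ)⁻¹ * 1 := by
        gcongr
        exact lp.opNorm_le_one_of_apply_eq_comp_equiv (by norm_num) (Equiv.subRight 1)
          (ContinuousLinearMap.norm_map_of_mem_unitary hu) hUt
      _ < √δ := by rwa [mul_one]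
  · calc _ ≤ (∑ m ∈ s, ‖ξ m‖ ^ 2 * |(m : ℝ)|) * δ :=
          lp.norm_sub_tensorRight_compression_diag_le s ξ (sum_norm_uniformWeight_sq N)
            (dist_twistedConj_le hq hu h) hVt fun g x => by rw [hVv, twistedConj, neg_sub]; rfl
      _ = N * (N + 1) / (2 * N + 1) * δ := by rw [sum_norm_uniformWeight_sq_mul_abs]
      _ < √δ := hVN

/-- Let `u, v` be unitaries with `‖vu - q·uv‖ ≤ δ`, `δ ∈ (0,1)`, and let
`ũ = u ⊗ S`, `ṽ = ∑_k q^k u^k v u^{-k} ⊗ p_k` on `H ⊗ ℓ²(ℤ)` (modeled as `ℓ²(ℤ, H)`).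
Define on `H ⊗ ℓ²(ℤ) ⊗ ℓ²(ℤ)` (modeled as `ℓ²(ℤ × ℤ, H)`) the operators `ũũ = ũ ⊗ S`,
i.e. `(ũũ f)(k,m) = u (f (k-1, m-1))`, and
`ṽṽ = ∑_m q^{-m} (u ⊗ id)^{-m} ṽ (u ⊗ id)^m ⊗ p_m`, i.e.
`(ṽṽ f)(k,m) = q^{k-m} u^{k-m} v u^{m-k} (f (k,m))`. Then there is an isometry
`ι : H ⊗ ℓ²(ℤ) → H ⊗ ℓ²(ℤ) ⊗ ℓ²(ℤ)` with `‖ũ - ι*ũũι‖ < √δ` and `‖ṽ - ι*ṽṽι‖ < √δ`. -/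
theorem stmt_10 {H : Type*} [NormedAddCommGroup H] [InnerProductSpace ℂ H] [CompleteSpace H]
    (q : ℂ) (hq : ‖q‖ = 1) (δ : ℝ) (hδ0 : 0 < δ) (hδ1 : δ < 1) (u v : H →L[ℂ] H)
    (hu : u ∈ unitary (H →L[ℂ] H)) (hv : v ∈ unitary (H →L[ℂ] H))
    (h : ‖v * u - q • (u * v)‖ ≤ δ)
    (Ut Vt : lp (fun _ : ℤ => H) 2 →L[ℂ] lp (fun _ : ℤ => H) 2)
    (hUt : ∀ (f : lp (fun _ : ℤ => H) 2) (k : ℤ), (Ut f : ∀ _ : ℤ, H) k = u (f (k - 1)))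
    (hVt : ∀ (f : lp (fun _ : ℤ => H) 2) (k : ℤ),
      (Vt f : ∀ _ : ℤ, H) k = q ^ k • (opZpow u k * v * opZpow u (-k)) (f k))
    (Uu Vv : lp (fun _ : ℤ × ℤ => H) 2 →L[ℂ] lp (fun _ : ℤ × ℤ => H) 2)
    (hUu : ∀ (f : lp (fun _ : ℤ × ℤ => H) 2) (p : ℤ × ℤ),
      (Uu f : ∀ _ : ℤ × ℤ, H) p = u (f (p.1 - 1, p.2 - 1)))
    (hVv : ∀ (f : lp (fun _ : ℤ × ℤ => H) 2) (p : ℤ × ℤ),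
      (Vv f : ∀ _ : ℤ × ℤ, H) p =
        q ^ (p.1 - p.2) • (opZpow u (p.1 - p.2) * v * opZpow u (p.2 - p.1)) (f p)) :
    ∃ ι : lp (fun _ : ℤ => H) 2 →L[ℂ] lp (fun _ : ℤ × ℤ => H) 2,
      Isometry ι ∧
      ‖Ut - ContinuousLinearMap.adjoint ι ∘L Uu ∘L ι‖ < Real.sqrt δ ∧
      ‖Vt - ContinuousLinearMap.adjoint ι ∘L Vv ∘L ι‖ < Real.sqrt δ :=
  stmt_10_general q hq δ hδ0 hδ1 u v hu h Ut Vt hUt hVt Uu Vv hUu hVv
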